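/- Let μ : ℝ → ℂ be a bounded continuous ergodic function with mean M(μ), and let α > 0 satisfy Re(M(μ)) < −α. Then there exist constants T₀ > 0 and c > 0 such that: (i) Re(∫_s^t μ(r) dr) < −α(t−s) for all s, t ∈ ℝ with t − s > T₀; and (ii) |exp(∫_s^t μ(r) dr)| ≤ c·exp(−α(t−s)) for all t, s with t ≥ s ≥ 0. -/

import Mathlib

open MeasureTheory Filter Topology

/-- A bounded continuous function `f : ℝ → ℂ` is ergodic with mean `M` if
`(1/(2T)) ∫_{−T+ξ}^{T+ξ} f(s) ds → M` as `T → ∞`, uniformly with respect to `ξ ∈ ℝ`. -/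
def ErgodicMeanC (f : ℝ → ℂ) (M : ℂ) : Prop :=
  ∀ ε > 0, ∃ T₁ > (0 : ℝ), ∀ T ≥ T₁, ∀ ξ : ℝ,
    ‖(((2 * T : ℝ) : ℂ))⁻¹ * (∫ s in (-T + ξ)..(T + ξ), f s) - M‖ < ε

/-!
Uniform convergence of the window averages means that every window `[s, t]` longer than some
`T₀` has average within `-α - Re M` of `M`, so `Re ∫_s^t μ < -α (t - s)` there. On the shorter
windows `Re ∫_s^t μ + α (t - s)` is bounded by `|C + α| T₀`, where `C` bounds `‖μ‖`, and this
constant is absorbed into `c`.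
-/

namespace ErgodicMeanC

variable {f : ℝ → ℂ} {M : ℂ}

theorem norm_average_sub_lt (hf : ErgodicMeanC f M) {ε : ℝ} (hε : 0 < ε) :
    ∃ L > (0 : ℝ), ∀ s t : ℝ, t - s > L →
      ‖(((t - s : ℝ) : ℂ))⁻¹ * (∫ r in s..t, f r) - M‖ < ε := by
  obtain ⟨T₁, hT₁, hT⟩ := hf ε hε
  refine ⟨2 * T₁, by positivity, fun s t hst => ?_⟩
  have h := hT ((t - s) / 2) (by linarith) ((s + t) / 2)
  have hlower : -((t - s) / 2) + (s + t) / 2 = s := by ring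
  have hupper : (t - s) / 2 + (s + t) / 2 = t := by ring
  have hlength : 2 * ((t - s) / 2) = t - s := by ring
  rwa [hlower, hupper, hlength] at h

theorem re_integral_lt (hf : ErgodicMeanC f M) {β : ℝ} (hβ : M.re < β) :
    ∃ T₀ > (0 : ℝ), ∀ s t : ℝ, t - s > T₀ → (∫ r in s..t, f r).re < β * (t - s) := by
  obtain ⟨T₀, hT₀, hclose⟩ := hf.norm_average_sub_lt (sub_pos.mpr hβ)
  refine ⟨T₀, hT₀, fun s t hst => ?_⟩
  have hlen : 0 < t - s := by linarith
  have hre : ((((t - s : ℝ) : ℂ))⁻¹ * (∫ r in s..t, f r) - M).re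
      = (∫ r in s..t, f r).re / (t - s) - M.re := by
    rw [Complex.sub_re, ← Complex.ofReal_inv, Complex.re_ofReal_mul, inv_mul_eq_div]
  have havg : (∫ r in s..t, f r).re / (t - s) < β := by
    linarith [(Complex.re_le_norm _).trans_lt (hclose s t hst)]
  rwa [div_lt_iff₀ hlen] at havg

end ErgodicMeanC

theorem re_intervalIntegral_le_of_norm_le {f : ℝ → ℂ} {C s t : ℝ} (hC : ∀ r, ‖f r‖ ≤ C)
    (hst : s ≤ t) : (∫ r in s..t, f r).re ≤ C * (t - s) := by
  calc (∫ r in s..t, f r).re ≤ ‖∫ r in s..t, f r‖ := Complex.re_le_norm _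
    _ ≤ C * |t - s| := intervalIntegral.norm_integral_le_of_norm_le_const fun r _ => hC r
    _ = C * (t - s) := by rw [abs_of_nonneg (sub_nonneg.mpr hst)]

theorem ergodic_negative_mean_exponential_estimates
    (μ : ℝ → ℂ) (hμb : ∃ C, ∀ t, ‖μ t‖ ≤ C)
    (M : ℂ) (hM : ErgodicMeanC μ M)
    (α : ℝ) (hMα : M.re < -α) :
    ∃ T₀ > (0 : ℝ), ∃ c > (0 : ℝ),
      (∀ s t : ℝ, t - s > T₀ → (∫ r in s..t, μ r).re < -α * (t - s)) ∧
      (∀ s t : ℝ, 0 ≤ s → s ≤ t →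
        ‖Complex.exp (∫ r in s..t, μ r)‖ ≤ c * Real.exp (-α * (t - s))) := by
  obtain ⟨C, hC⟩ := hμb
  obtain ⟨T₀, hT₀, hlong⟩ := hM.re_integral_lt hMα
  refine ⟨T₀, hT₀, Real.exp (|C + α| * T₀), Real.exp_pos _, hlong, fun s t _ hst => ?_⟩
  rw [Complex.norm_exp, ← Real.exp_add, Real.exp_le_exp]
  rcases lt_or_ge T₀ (t - s) with hlength | hlength
  · linarith [hlong s t hlength, show 0 ≤ |C + α| * T₀ by positivity]
  · have hshort : (C + α) * (t - s) ≤ |C + α| * T₀ :=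
      (mul_le_mul_of_nonneg_right (le_abs_self _) (sub_nonneg.mpr hst)).trans
        (mul_le_mul_of_nonneg_left hlength (abs_nonneg _))
    linarith [re_intervalIntegral_le_of_norm_le hC hst]
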